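/- Let A = (Q, δ, s) be an input-consistent DFA whose source has no in-going transitions and in which every state is reachable from s. Then for any two distinct states u, v ∈ Q: u ≺_A v (i.e., α < β co-lexicographically for all α ∈ S_u and β ∈ S_v) if and only if sup S_u ≤ inf S_v in the co-lexicographic order on Σ^•. -/

import Mathlib

/-- A finite or left-infinite string over the alphabet `A` (an element of
`Σ^• = Σ* ∪ Σ^ω`), represented by the function `f` sending a position `i`
(counted from the right end, starting at `0`) to the character at that
position, or to `none` beyond the left end of a finite string. The field
`init` says the support of `f` is an initial segment of `ℕ`. -/
structure ColexStr (A : Type*) where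
  f : ℕ → Option A
  init : ∀ i, f i = none → f (i + 1) = none

/-- The finite string `c₁⋯cₙ` given by the list `[c₁, …, cₙ]`, as a `ColexStr`. -/
def ofList {A : Type*} (l : List A) : ColexStr A where
  f i := if h : i < l.length then some (l[l.length - 1 - i]'(by omega)) else none
  init i hi := by
    try dsimp only at hi ⊢
    by_cases h : i + 1 < l.length
    · exfalso
      have h' : i < l.length := by omega
      rw [dif_pos h'] at hi
      exact (Option.some_ne_none _) hi
    · rw [dif_neg h]

/-- `α` is a proper suffix of `β`: the characters of `α` agree with those of `β`
(at the same positions from the right end), and `β` extends strictly further to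
the left. -/
def IsProperSuffix {A : Type*} (α β : ColexStr A) : Prop :=
  (∀ i, α.f i ≠ none → β.f i = α.f i) ∧ ∃ i, α.f i = none ∧ β.f i ≠ none

/-- The co-lexicographic order on `Σ^•`: `α < β` iff either `α` is a proper
suffix of `β`, or `α = α'aγ` and `β = β'bγ` for some finite common suffix `γ`
(of length `n`), letters `a < b`, and (possibly empty) strings `α'`, `β'`. -/
def ColexLt {A : Type*} [LT A] (α β : ColexStr A) : Prop :=
  IsProperSuffix α β ∨
    ∃ (n : ℕ) (a b : A), a < b ∧ α.f n = some a ∧ β.f n = some b ∧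
      ∀ i < n, α.f i = β.f i

/-- The reflexive closure `≤` of the co-lexicographic order on `Σ^•`. -/
def ColexLe {A : Type*} [LT A] (α β : ColexStr A) : Prop :=
  ColexLt α β ∨ α = β

/-- `γ` is the greatest lower bound (infimum) in `(Σ^•, ≤)` of the set `S` of
finite strings. -/
def IsColexGLB {A : Type*} [LT A] (S : Set (List A)) (γ : ColexStr A) : Prop :=
  (∀ l ∈ S, ColexLe γ (ofList l)) ∧
    ∀ γ' : ColexStr A, (∀ l ∈ S, ColexLe γ' (ofList l)) → ColexLe γ' γ

/-- `γ` is the least upper bound (supremum) in `(Σ^•, ≤)` of the set `S` of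
finite strings. -/
def IsColexLUB {A : Type*} [LT A] (S : Set (List A)) (γ : ColexStr A) : Prop :=
  (∀ l ∈ S, ColexLe (ofList l) γ) ∧
    ∀ γ' : ColexStr A, (∀ l ∈ S, ColexLe (ofList l) γ') → ColexLe γ γ'

/-- Extension of the transition function to strings (lists of letters). -/
def deltaStr {Q A : Type*} (δ : Q → A → Set Q) : Q → List A → Set Q
  | v, [] => {v}
  | v, a :: w => ⋃ x ∈ δ v a, deltaStr δ x w

/-- `reach δ s v` is the set `S_v` of strings reaching `v` from the source `s`. -/
def reach {Q A : Type*} (δ : Q → A → Set Q) (s v : Q) : Set (List A) :=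
  {α | v ∈ deltaStr δ s α}


section Aux

variable {Q A : Type*}

lemma ColexStr.none_mono (α : ColexStr A) {i j : ℕ} (h : α.f i = none) (hij : i ≤ j) :
    α.f j = none := by
  induction j, hij using Nat.le_induction with
  | base => exact h
  | succ n _ ih => exact α.init n ih

lemma ColexStr.ne_none_below (α : ColexStr A) {i j : ℕ} (h : α.f j ≠ none) (hij : i ≤ j) :
    α.f i ≠ none := fun hn => h (α.none_mono hn hij)

lemma colexLt_trans [LinearOrder A] {α β γ : ColexStr A}
    (h1 : ColexLt α β) (h2 : ColexLt β γ) : ColexLt α γ := by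
  rcases h1 with ⟨hag, i0, hi0, hi0'⟩ | ⟨n, a, b, hab, hαn, hβn, hag⟩
  · rcases h2 with ⟨hag', j0, hj0, hj0'⟩ | ⟨m, c, d, hcd, hβm, hγm, hag'⟩
    · refine Or.inl ⟨fun i hi => ?_, i0, hi0, ?_⟩
      · rw [hag' i (by rw [hag i hi]; exact hi), hag i hi]
      · rw [hag' i0 hi0']; exact hi0'
    · by_cases hα : α.f m = none
      · refine Or.inl ⟨fun i hi => ?_, m, hα, by rw [hγm]; simp⟩
        have hilt : i < m := by
          by_contra hge
          exact hi (α.none_mono hα (by omega))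
        rw [← hag' i hilt, hag i hi]
      · refine Or.inr ⟨m, c, d, hcd, ?_, hγm, fun i hin => ?_⟩
        · rw [← hag m hα, hβm]
        · have hαi : α.f i ≠ none := α.ne_none_below hα (le_of_lt hin)
          rw [← hag' i hin, hag i hαi]
  · rcases h2 with ⟨hag', j0, hj0, hj0'⟩ | ⟨m, c, d, hcd, hβm, hγm, hag'⟩
    · refine Or.inr ⟨n, a, b, hab, hαn, ?_, fun i hin => ?_⟩
      · rw [hag' n (by rw [hβn]; simp)]; exact hβn
      · have hβi : β.f i ≠ none := β.ne_none_below (by rw [hβn]; simp) (le_of_lt hin)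
        rw [hag i hin, ← hag' i hβi]
    · rcases lt_trichotomy n m with hnm | hnm | hnm
      · refine Or.inr ⟨n, a, b, hab, hαn, ?_, fun i hin => ?_⟩
        · rw [← hag' n hnm]; exact hβn
        · rw [hag i hin, hag' i (by omega)]
      · subst hnm
        have hbc : b = c := by
          have := hβn.symm.trans hβm
          exact Option.some_injective _ this
        exact Or.inr ⟨n, a, d, lt_trans hab (hbc ▸ hcd), hαn, hγm, fun i hin =>
          (hag i hin).trans (hag' i hin)⟩
      · refine Or.inr ⟨m, c, d, hcd, ?_, hγm, fun i him => ?_⟩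
        · rw [hag m hnm]; exact hβm
        · rw [hag i (by omega), hag' i him]

lemma colexLe_trans [LinearOrder A] {α β γ : ColexStr A}
    (h1 : ColexLe α β) (h2 : ColexLe β γ) : ColexLe α γ := by
  rcases h1 with h1 | rfl
  · rcases h2 with h2 | rfl
    · exact Or.inl (colexLt_trans h1 h2)
    · exact Or.inl h1
  · exact h2

lemma ofList_f_eq (l : List A) (i : ℕ) : (ofList l).f i = l.reverse[i]? := by
  by_cases h : i < l.length
  · rw [show (ofList l).f i = some (l[l.length - 1 - i]'(by omega)) from dif_pos h]
    rw [List.getElem?_eq_getElem (by simpa using h), List.getElem_reverse]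
  · rw [show (ofList l).f i = none from dif_neg h]
    rw [List.getElem?_eq_none (by simpa using not_lt.mp h)]

lemma ofList_injective (l₁ l₂ : List A) (h : ofList l₁ = ofList l₂) : l₁ = l₂ := by
  have hf : ∀ i : ℕ, l₁.reverse[i]? = l₂.reverse[i]? := by
    intro i
    rw [← ofList_f_eq, ← ofList_f_eq, h]
  have := List.ext_getElem? hf
  exact List.reverse_injective this

lemma deltaStr_subsingleton (δ : Q → A → Set Q) (hdfa : ∀ u a, (δ u a).Subsingleton)
    (l : List A) : ∀ v : Q, (deltaStr δ v l).Subsingleton := by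
  induction l with
  | nil =>
    intro v x hx y hy
    simp only [deltaStr, Set.mem_singleton_iff] at hx hy
    rw [hx, hy]
  | cons a w ih =>
    intro v x hx y hy
    simp only [deltaStr, Set.mem_iUnion] at hx hy
    obtain ⟨x1, hx1, hx2⟩ := hx
    obtain ⟨y1, hy1, hy2⟩ := hy
    have hxy : x1 = y1 := hdfa v a hx1 hy1
    subst hxy
    exact ih x1 hx2 hy2

end Aux

/-- For an input-consistent DFA (source without in-going transitions, all
states reachable) and any two distinct states `u, v` with `γu = sup S_u` and
`γv = inf S_v`: `u ≺_A v` (every string reaching `u` is co-lexicographically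
smaller than every string reaching `v`) holds if and only if
`sup S_u ≤ inf S_v` in the co-lexicographic order on `Σ^•`. -/
theorem stmt16 {Q A : Type*} [Fintype Q] [Fintype A] [LinearOrder A]
    (δ : Q → A → Set Q) (s : Q)
    (hdfa : ∀ u a, (δ u a).Subsingleton)
    (hs : ∀ u a, s ∉ δ u a)
    (hreach : ∀ v : Q, ∃ α, v ∈ deltaStr δ s α)
    (hic : ∀ v : Q, v ≠ s → ∃! a : A, ∃ u, v ∈ δ u a)
    (u v : Q) (huv : u ≠ v)
    (γu γv : ColexStr A)
    (hγu : IsColexLUB (reach δ s u) γu)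
    (hγv : IsColexGLB (reach δ s v) γv) :
    (∀ α ∈ reach δ s u, ∀ β ∈ reach δ s v, ColexLt (ofList α) (ofList β)) ↔
      ColexLe γu γv := by
  constructor
  · intro h
    exact hγu.2 γv fun l hl => hγv.2 (ofList l) (fun l' hl' => Or.inl (h l hl l' hl'))
  · intro h α hα β hβ
    have h1 : ColexLe (ofList α) γu := hγu.1 α hα
    have h2 : ColexLe γv (ofList β) := hγv.1 β hβ
    have h3 : ColexLe (ofList α) (ofList β) :=
      colexLe_trans h1 (colexLe_trans h h2)
    rcases h3 with h3 | h3
    · exact h3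
    · exfalso
      have hαβ : α = β := ofList_injective _ _ h3
      subst hαβ
      exact huv (deltaStr_subsingleton δ hdfa α s hα hβ)
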